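/- With Z₀ = ∏_n 𝒜_n and the relation ℛ on finite sequences defined by s ℛ t iff |s| = |t| and (N_s × N_t) meets ⋃_{n>0} Gr(f_n) (graphs taken in Z₀), letting ℰ be the generated equivalence relation: for every p, the set ∏_{n<p} 𝒜_n of sequences of length p is exactly one ℰ-equivalence class, namely ℰ(1^p). -/

import Mathlib

/-! Every step of `ℛ` preserves the length and stays inside `∏ 𝒜_n`, which gives one inclusion.
Conversely, for `v ⌢ r` in `∏ 𝒜_n` with `|v| = k`, induction on `k` shows `v ⌢ r ℰ 1^k ⌢ r`.
In the step write `v = v' ⌢ x` with `|v'| = k`. If `x = 1` this is the induction hypothesis;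
otherwise `x = N(w ⌢ 1)` with `w ∈ ∏_{i<k} 𝒜_i`, and `v' ⌢ x ⌢ r ℰ w ⌢ x ⌢ r` by induction,
`f_k` maps `w ⌢ 1 ⌢ r` to `w ⌢ x ⌢ r`, and `w ⌢ 1 ⌢ r ℰ 1^k ⌢ 1 ⌢ r` by induction again. -/

noncomputable def Nmap (s : List ℕ) : ℕ :=
  if s = [] then 0
  else ∏ i ∈ Finset.range s.length, (Nat.nth Nat.Prime i) ^ (s.getD i 0 + 1)

noncomputable def Aset : ℕ → Set ℕ
  | 0 => {1}
  | n + 1 => {1} ∪ {m | ∃ s : List ℕ, s.length = n + 1 ∧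
      (∀ i, (hi : i < n + 1) → s.getD i 0 ∈ Aset i) ∧ m = Nmap (s ++ [1])}

/-- `f n` changes the `n`-th coordinate of `α` from `1` to `N(α↾n ⌢ 1)`. -/
noncomputable def fmap (n : ℕ) (α : ℕ → ℕ) : ℕ → ℕ :=
  Function.update α n (Nmap (List.ofFn (fun i : Fin n => α i) ++ [1]))

/-- `s ℛ t` iff `|s| = |t|` and the basic clopen rectangle `N_s × N_t` of
`Z₀ × Z₀` meets `⋃_{n>0} Gr(f_n)`, the graphs being taken in `Z₀`. -/
def Rrel (s t : List ℕ) : Prop :=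
  s.length = t.length ∧ ∃ α β : ℕ → ℕ,
    (∀ k, α k ∈ Aset k) ∧ (∀ k, β k ∈ Aset k) ∧
    (∀ i < s.length, α i = s.getD i 0) ∧ (∀ i < t.length, β i = t.getD i 0) ∧
    ∃ n, 0 < n ∧ α n = 1 ∧ β = fmap n α

open Relation

def Admissible (s : List ℕ) : Prop :=
  ∀ i < s.length, s.getD i 0 ∈ Aset i

lemma mem_Aset_zero {x : ℕ} : x ∈ Aset 0 ↔ x = 1 := by
  rw [Aset, Set.mem_singleton_iff]

lemma mem_Aset_succ {m x : ℕ} : x ∈ Aset (m + 1) ↔ x = 1 ∨ ∃ w : List ℕ,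
    w.length = m + 1 ∧ Admissible w ∧ x = Nmap (w ++ [1]) := by
  rw [Aset]
  exact or_congr_right <| exists_congr fun w =>
    and_congr_right fun hw => and_congr_left' (by rw [Admissible, hw])

lemma one_mem_Aset : ∀ n, 1 ∈ Aset n
  | 0 => mem_Aset_zero.mpr rfl
  | _ + 1 => mem_Aset_succ.mpr (Or.inl rfl)

lemma Nmap_append_one_mem_Aset {w : List ℕ} (hw : 0 < w.length) (h : Admissible w) :
    Nmap (w ++ [1]) ∈ Aset w.length := by
  obtain ⟨m, hm⟩ := Nat.exists_eq_add_one.mpr hw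
  rw [hm]
  exact mem_Aset_succ.mpr (Or.inr ⟨w, hm, h, rfl⟩)

lemma exists_of_mem_Aset {k x : ℕ} (hx : x ∈ Aset k) (h1 : x ≠ 1) :
    ∃ w : List ℕ, w.length = k ∧ 0 < k ∧ Admissible w ∧ x = Nmap (w ++ [1]) := by
  cases k with
  | zero => exact absurd (mem_Aset_zero.mp hx) h1
  | succ m =>
    obtain hx | ⟨w, hw, hadm, rfl⟩ := mem_Aset_succ.mp hx
    · exact absurd hx h1
    · exact ⟨w, hw, m.succ_pos, hadm, rfl⟩

namespace Admissible

lemma getD_one_mem {s : List ℕ} (h : Admissible s) (i : ℕ) : s.getD i 1 ∈ Aset i := by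
  by_cases hi : i < s.length
  · rw [List.getD_eq_getElem _ _ hi, ← List.getD_eq_getElem _ 0 hi]
    exact h i hi
  · rw [List.getD_eq_default _ _ (not_lt.mp hi)]
    exact one_mem_Aset i

lemma append_iff {u v : List ℕ} :
    Admissible (u ++ v) ↔ Admissible u ∧ ∀ i < v.length, v.getD i 0 ∈ Aset (u.length + i) := by
  constructor
  · intro h
    refine ⟨fun i hi => ?_, fun i hi => ?_⟩
    · simpa only [List.getD_append _ _ _ _ hi] using h i (by simp; omega)
    · have := h (u.length + i) (by simp; omega)
      rwa [List.getD_append_right _ _ _ _ (Nat.le_add_right _ _), Nat.add_sub_cancel_left] at this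
  · rintro ⟨hu, hv⟩ i hi
    rcases lt_or_ge i u.length with hi' | hi'
    · rw [List.getD_append _ _ _ _ hi']
      exact hu i hi'
    · obtain ⟨j, rfl⟩ := Nat.exists_eq_add_of_le hi'
      rw [List.getD_append_right _ _ _ _ hi', Nat.add_sub_cancel_left]
      exact hv j (by simp at hi; omega)

lemma append_of_length_eq {u v r : List ℕ} (h : Admissible (u ++ r)) (hv : Admissible v)
    (hlen : v.length = u.length) : Admissible (v ++ r) :=
  append_iff.mpr ⟨hv, hlen ▸ (append_iff.mp h).2⟩

lemma append_cons_of_mem {u r : List ℕ} {x y : ℕ} (h : Admissible (u ++ y :: r))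
    (hx : x ∈ Aset u.length) : Admissible (u ++ x :: r) := by
  obtain ⟨hu, htail⟩ := append_iff.mp h
  refine append_iff.mpr ⟨hu, fun i hi => ?_⟩
  cases i with
  | zero => simpa using hx
  | succ i => simpa using htail (i + 1) (by simpa using hi)

lemma mem_of_append_cons {u r : List ℕ} {x : ℕ} (h : Admissible (u ++ x :: r)) :
    x ∈ Aset u.length := by
  simpa using (append_iff.mp h).2 0 (by simp)

lemma replicate_one (p : ℕ) : Admissible (List.replicate p 1) := by
  intro i hi
  rw [List.getD_replicate 1 (by simpa using hi)]
  exact one_mem_Aset i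

end Admissible

lemma Rrel.length_eq_and_admissible {s t : List ℕ} (h : Rrel s t) :
    s.length = t.length ∧ Admissible s ∧ Admissible t := by
  obtain ⟨hlen, α, β, hα, hβ, hαs, hβt, -⟩ := h
  exact ⟨hlen, fun i hi => hαs i hi ▸ hα i, fun i hi => hβt i hi ▸ hβ i⟩

lemma rrel_append_cons {w r : List ℕ} (hw : 0 < w.length) (h : Admissible (w ++ 1 :: r)) :
    Rrel (w ++ 1 :: r) (w ++ Nmap (w ++ [1]) :: r) := by
  set s := w ++ 1 :: r
  set s' := w ++ Nmap (w ++ [1]) :: r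
  have h' : Admissible s' :=
    h.append_cons_of_mem (Nmap_append_one_mem_Aset hw (Admissible.append_iff.mp h).1)
  have hprefix : List.ofFn (fun i : Fin w.length => s.getD i 1) = w := by
    refine List.ext_getElem (by simp) fun i _ hi => ?_
    simp [s, List.getElem?_append_left hi, List.getElem?_eq_getElem hi]
  have hf : fmap w.length (s.getD · 1) = (s'.getD · 1) := by
    funext i
    rw [fmap, hprefix]
    rcases lt_trichotomy i w.length with hi | rfl | hi
    · simp [Function.update_of_ne hi.ne, s, s', List.getElem?_append_left hi]
    · simp [s']
    · obtain ⟨j, rfl⟩ := Nat.exists_eq_add_of_lt hi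
      simp [s, s', Nat.add_assoc,
        List.getElem?_append_right (Nat.le_add_right w.length (j + 1))]
  have hgetD : ∀ (l : List ℕ), ∀ i < l.length, l.getD i 1 = l.getD i 0 := fun l i hi => by
    rw [List.getD_eq_getElem _ _ hi, List.getD_eq_getElem _ _ hi]
  -- The witnesses are the two lists padded with `1`s, which keeps them in `Z₀`.
  exact ⟨by simp [s, s'], (s.getD · 1), (s'.getD · 1), h.getD_one_mem, h'.getD_one_mem,
    hgetD s, hgetD s', w.length, hw, by simp [s], hf.symm⟩

lemma Rrel.eqvGen_length_eq_and_admissible_iff {s t : List ℕ}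
    (h : EqvGen Rrel s t) : s.length = t.length ∧ (Admissible s ↔ Admissible t) := by
  induction h with
  | rel s t h =>
    obtain ⟨hlen, hs, ht⟩ := h.length_eq_and_admissible
    exact ⟨hlen, iff_of_true hs ht⟩
  | refl => exact ⟨rfl, Iff.rfl⟩
  | symm _ _ _ ih => exact ⟨ih.1.symm, ih.2.symm⟩
  | trans _ _ _ _ _ ih₁ ih₂ => exact ⟨ih₁.1.trans ih₂.1, ih₁.2.trans ih₂.2⟩

lemma eqvGen_rrel_replicate_one_append (k : ℕ) :
    ∀ v r : List ℕ, v.length = k → Admissible (v ++ r) →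
      EqvGen Rrel (v ++ r) (List.replicate k 1 ++ r) := by
  have e := EqvGen.is_equivalence Rrel
  induction k with
  | zero =>
    intro v r hv _
    rw [List.length_eq_zero_iff.mp hv]
    exact e.refl r
  | succ k ih =>
    have congr_prefix : ∀ u v r : List ℕ, u.length = k → v.length = k →
        Admissible (u ++ r) → Admissible (v ++ r) → EqvGen Rrel (u ++ r) (v ++ r) :=
      fun u v r hu hv hur hvr => e.trans (ih u r hu hur) (e.symm (ih v r hv hvr))
    intro v r hv hvr
    obtain ⟨v, x, rfl⟩ : ∃ v' x, v = v' ++ [x] :=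
      (List.eq_nil_or_concat' v).resolve_left (by rintro rfl; simp at hv)
    rw [List.length_append, List.length_singleton, Nat.add_right_cancel_iff] at hv
    subst hv
    rw [List.append_assoc, List.singleton_append] at hvr ⊢
    rw [List.replicate_succ', List.append_assoc, List.singleton_append]
    by_cases hx : x = 1
    · subst hx
      exact ih v _ rfl hvr
    obtain ⟨w, hw, hk, hwadm, rfl⟩ := exists_of_mem_Aset hvr.mem_of_append_cons hx
    have hw_x : Admissible (w ++ Nmap (w ++ [1]) :: r) :=
      hvr.append_of_length_eq hwadm hw
    have hw_one : Admissible (w ++ 1 :: r) := hw_x.append_cons_of_mem (one_mem_Aset _)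
    have hrep_one : Admissible (List.replicate v.length 1 ++ 1 :: r) :=
      hw_one.append_of_length_eq (Admissible.replicate_one _) (by simp [hw])
    have hstep := EqvGen.rel _ _ (rrel_append_cons (hw ▸ hk) hw_one)
    exact e.trans (congr_prefix v w _ rfl hw hvr hw_x)
      (e.trans (e.symm hstep) (congr_prefix w _ _ hw (by simp) hw_one hrep_one))

/-- For every `p`, the `ℰ`-equivalence class of `1^p` is exactly
`∏_{n<p} 𝒜_n`, the set of sequences `s` of length `p` with `s i ∈ 𝒜_i`. -/
theorem stmt_15 (p : ℕ) :
    {t | Relation.EqvGen Rrel (List.replicate p 1) t} =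
      {s : List ℕ | s.length = p ∧ ∀ i < p, s.getD i 0 ∈ Aset i} := by
  ext t
  refine ⟨fun h => ?_, fun ⟨hlen, ht⟩ => ?_⟩
  · obtain ⟨hlen, hadm⟩ := Rrel.eqvGen_length_eq_and_admissible_iff h
    rw [List.length_replicate] at hlen
    subst hlen
    exact ⟨rfl, hadm.mp (Admissible.replicate_one _)⟩
  · subst hlen
    have := eqvGen_rrel_replicate_one_append t.length t [] rfl (by simpa [Admissible] using ht)
    simpa using (EqvGen.is_equivalence Rrel).symm this
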